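/- arXiv:1707.03091 — 4 statements merged into one kernel-verified Lean document; each statement's English description precedes it below -/
import Mathlib

section
/- Let T be a tree of height h with root x, and for each v ∈ V(T) let T_v be the subtree of T rooted at v. Let b be a positive integer and let S be a set of at least b·h + 1 vertices of T. Then there exists a vertex y at distance i from x, for some 0 ≤ i ≤ h−1, such that |V(T_y) ∩ S| ≥ |S| − i·b and for every child z of y in T, |V(T_z) ∩ S| ≤ |V(T_y) ∩ S| − b. -/
open Finset

/-- `u` is a vertex of the subtree of `T` rooted at `x` hanging from `y` (i.e. `u` is a
descendant of `y`): the unique path from the root `x` to `u` passes through `y`. -/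
def InSubtree {V : Type*} (T : SimpleGraph V) (x y u : V) : Prop :=
  T.dist x u = T.dist x y + T.dist y u

noncomputable instance {V : Type*} (T : SimpleGraph V) (x y u : V) : Decidable (InSubtree T x y u) :=
  inferInstanceAs (Decidable (_ = _))

/-- **Balanced-root lemma.** Let `T` be a tree of height `h` rooted at `x`, let `b > 0`, and
let `S` be a set of at least `b·h + 1` vertices of `T`.  Then some vertex `y` at distance `i`
from `x`, with `0 ≤ i ≤ h - 1`, satisfies `|V(T_y) ∩ S| ≥ |S| - i·b`, while for every child `z`
of `y` we have `|V(T_z) ∩ S| ≤ |V(T_y) ∩ S| - b`. -/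
theorem balanced_root {V : Type*} [Fintype V] [DecidableEq V]
    (T : SimpleGraph V) (hT : T.IsTree) (x : V) (h b : ℕ) (hb : 0 < b)
    (hheight : ∀ v : V, T.dist x v ≤ h)
    (S : Finset V) (hS : b * h + 1 ≤ S.card) :
    ∃ (i : ℕ) (y : V), i ≤ h - 1 ∧ T.dist x y = i ∧
      S.card ≤ (S.filter fun u => InSubtree T x y u).card + i * b ∧
      ∀ z : V, T.Adj y z → T.dist x z = T.dist x y + 1 →
        (S.filter fun u => InSubtree T x z u).card + b ≤
          (S.filter fun u => InSubtree T x y u).card := by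
  classical
  have hconn := hT.isConnected
  set c : V → ℕ := fun y => (S.filter fun u => InSubtree T x y u).card with hc
  have hcx : c x = S.card := by
    simp only [hc]
    rw [Finset.filter_true_of_mem]
    intro u _
    unfold InSubtree
    simp [SimpleGraph.dist_self]
  -- vertices at distance h have at most one element of S in their subtree
  have hch : ∀ z, T.dist x z = h → c z ≤ 1 := by
    intro z hz
    have hsub : S.filter (fun u => InSubtree T x z u) ⊆ {z} := by
      intro u hu
      simp only [mem_filter] at hu
      have h1 := hu.2
      unfold InSubtree at h1
      have h2 := hheight u
      rw [h1, hz] at h2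
      have h3 : T.dist z u = 0 := by omega
      rw [SimpleGraph.dist_eq_zero_iff_eq_or_not_reachable] at h3
      rcases h3 with h3 | h3
      · simp [h3]
      · exact absurd (hconn.preconnected z u) h3
    calc c z ≤ ({z} : Finset V).card := Finset.card_le_card hsub
    _ = 1 := by simp
  -- the set of candidate vertices
  set P : V → Prop := fun y => T.dist x y ≤ h - 1 ∧ S.card ≤ c y + T.dist x y * b with hP
  have hxP : x ∈ Finset.univ.filter P := by
    simp only [mem_filter, mem_univ, true_and, hP]
    constructor
    · simp [SimpleGraph.dist_self]
    · simp [SimpleGraph.dist_self, hcx]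
  obtain ⟨y, hyA, hmax⟩ := Finset.exists_max_image (Finset.univ.filter P)
    (fun y => T.dist x y) ⟨x, hxP⟩
  simp only [mem_filter, mem_univ, true_and, hP] at hyA
  refine ⟨T.dist x y, y, hyA.1, rfl, hyA.2, ?_⟩
  intro z hadj hdz
  show c z + b ≤ c y
  by_cases hcase : T.dist x z ≤ h - 1
  · -- maximality: z is not a candidate
    have hz : ¬ (S.card ≤ c z + T.dist x z * b) := by
      intro hmem
      have := hmax z (by simp only [mem_filter, mem_univ, true_and, hP]; exact ⟨hcase, hmem⟩)
      omega
    push_neg at hz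
    rw [hdz] at hz
    have hexp : (T.dist x y + 1) * b = T.dist x y * b + b := by ring
    have := hyA.2
    omega
  · -- z is at distance h
    have hzh : T.dist x z = h := by
      have := hheight z
      omega
    have h1 := hch z hzh
    have h2 := hyA.2
    have h3 : T.dist x y + 1 = h := by omega
    have h4 : T.dist x y * b + b = h * b := by rw [← h3]; ring
    have h5 : b * h = h * b := by ring
    omega
end

section
/- Let G be a bipartite graph with bipartition (A, B). Then there exists a subgraph G' of G with bipartition (A', B'), A' ⊆ A and B' ⊆ B, such that e(G') ≥ (1/2)·e(G), every vertex of A' has degree at least (1/4)·d_A(G) in G', and every vertex of B' has degree at least (1/4)·d_B(G) in G'. -/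
/-!
Give each vertex the weight `c v = d_A(G)/4` on `A` and `d_B(G)/4` on `B`, so that the total
weight is at most `e(G)/2`, and take a vertex set `S` maximising `e(G[S]) - ∑_{v ∈ S} c v`.
Deleting a vertex `v ∈ S` changes this potential by `c v - deg_{G[S]} v`, so by maximality every
vertex of `G[S]` has degree at least its weight; comparing with `S = V` gives
`e(G[S]) ≥ e(G) - ∑ c ≥ e(G)/2`.
-/

open Finset

namespace SimpleGraph

variable {V : Type*}

theorem ncard_edgeSet_deleteIncidenceSet_add_ncard_neighborSet [Finite V]
    (G : SimpleGraph V) (v : V) :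
    (G.deleteIncidenceSet v).edgeSet.ncard + (G.neighborSet v).ncard = G.edgeSet.ncard := by
  classical
  rw [edgeSet_deleteIncidenceSet, ← Set.ncard_congr' (G.incidenceSetEquivNeighborSet v),
    Set.ncard_sdiff_add_ncard_of_subset (G.incidenceSet_subset v)]

namespace Subgraph

variable {G : SimpleGraph V}

theorem spanningCoe_induce_diff_singleton (G' : G.Subgraph) (s : Set V) (v : V) :
    (G'.induce (s \ {v})).spanningCoe = (G'.induce s).spanningCoe.deleteIncidenceSet v := by
  ext u w
  simp only [spanningCoe_adj, induce_adj, deleteIncidenceSet_adj, Set.mem_sdiff,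
    Set.mem_singleton_iff]
  tauto

theorem ncard_edgeSet_induce_diff_singleton_add [Finite V] (G' : G.Subgraph) (s : Set V)
    (v : V) :
    (G'.induce (s \ {v})).edgeSet.ncard + ((G'.induce s).neighborSet v).ncard =
      (G'.induce s).edgeSet.ncard := by
  rw [← edgeSet_spanningCoe, ← edgeSet_spanningCoe, spanningCoe_induce_diff_singleton]
  exact ncard_edgeSet_deleteIncidenceSet_add_ncard_neighborSet _ v

end Subgraph

theorem exists_induce_weight_le_degree [Fintype V] [DecidableEq V] (G : SimpleGraph V)
    (c : V → ℝ) (hc : ∀ v, 0 ≤ c v) :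
    ∃ S : Finset V,
      (G.edgeSet.ncard : ℝ) - ∑ v, c v ≤ ((⊤ : G.Subgraph).induce S).edgeSet.ncard ∧
      ∀ v ∈ S, c v ≤ (((⊤ : G.Subgraph).induce S).neighborSet v).ncard := by
  let f : Finset V → ℝ := fun S =>
    ((⊤ : G.Subgraph).induce S).edgeSet.ncard - ∑ v ∈ S, c v
  obtain ⟨S, -, hS⟩ := exists_max_image univ f univ_nonempty
  refine ⟨S, ?_, fun v hv => ?_⟩
  · have hmax : f univ ≤ f S := hS univ (mem_univ _)
    have hsum : 0 ≤ ∑ v ∈ S, c v := sum_nonneg fun v _ => hc v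
    have htop : (⊤ : G.Subgraph).induce Set.univ = ⊤ := by
      rw [← Subgraph.verts_top, Subgraph.induce_self_verts]
    simp only [f, coe_univ, htop, Subgraph.edgeSet_top] at hmax
    linarith
  · have hmax : f (S.erase v) ≤ f S := hS _ (mem_univ _)
    have hdel : (((⊤ : G.Subgraph).induce (↑S \ {v})).edgeSet.ncard : ℝ) +
        (((⊤ : G.Subgraph).induce S).neighborSet v).ncard =
        ((⊤ : G.Subgraph).induce S).edgeSet.ncard := by
      exact_mod_cast Subgraph.ncard_edgeSet_induce_diff_singleton_add ⊤ (S : Set V) v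
    simp only [f, coe_erase, ← sum_erase_add S c hv] at hmax
    linarith

end SimpleGraph

theorem Finset.sum_div_card_le {α : Type*} (s : Finset α) {x : ℝ} (hx : 0 ≤ x) :
    ∑ _v ∈ s, x / #s ≤ x := by
  rw [sum_const, nsmul_eq_mul]
  rcases eq_or_ne (#s : ℝ) 0 with hs | hs
  · simpa [hs] using hx
  · rw [mul_div_cancel₀ _ hs]

theorem bipartite_min_degree_subgraph_general {V : Type*} [Fintype V] [DecidableEq V]
    (G : SimpleGraph V) (A B : Finset V)
    (hdisj : Disjoint A B) (hcover : A ∪ B = Finset.univ) :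
    ∃ (A' B' : Finset V) (G' : G.Subgraph),
      A' ⊆ A ∧ B' ⊆ B ∧ G'.verts = ↑(A' ∪ B') ∧
      (G.edgeSet.ncard : ℝ) / 2 ≤ (G'.edgeSet.ncard : ℝ) ∧
      (∀ a ∈ A', (1 / 4 : ℝ) * ((G.edgeSet.ncard : ℝ) / (A.card : ℝ)) ≤
        ((G'.neighborSet a).ncard : ℝ)) ∧
      (∀ b ∈ B', (1 / 4 : ℝ) * ((G.edgeSet.ncard : ℝ) / (B.card : ℝ)) ≤
        ((G'.neighborSet b).ncard : ℝ)) := by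
  set E : ℝ := (G.edgeSet.ncard : ℝ)
  let c : V → ℝ := fun v => if v ∈ A then 1 / 4 * (E / #A) else 1 / 4 * (E / #B)
  have hc : ∀ v, 0 ≤ c v := fun v => by unfold c; split_ifs <;> positivity
  have hsum : ∑ v, c v ≤ E / 2 := by
    rw [← hcover, sum_union hdisj, sum_ite_of_true fun _ h => h,
      sum_ite_of_false fun _ hB hA => disjoint_left.1 hdisj hA hB, ← mul_sum, ← mul_sum]
    have hE : 0 ≤ E := by positivity
    linarith [A.sum_div_card_le hE, B.sum_div_card_le hE]
  obtain ⟨S, hedges, hdeg⟩ := G.exists_induce_weight_le_degree c hc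
  refine ⟨S ∩ A, S ∩ B, (⊤ : G.Subgraph).induce S, inter_subset_right, inter_subset_right,
    ?_, by linarith, fun a ha => ?_, fun b hb => ?_⟩
  · rw [SimpleGraph.Subgraph.induce_verts, ← inter_union_distrib_left, hcover, inter_univ]
  · simpa only [c, if_pos (mem_inter.1 ha).2] using hdeg a (mem_inter.1 ha).1
  · have hbA : b ∉ A := disjoint_right.1 hdisj (mem_inter.1 hb).2
    simpa only [c, if_neg hbA] using hdeg b (mem_inter.1 hb).1

/-- **Min-degree cleaning lemma for bipartite graphs.** Every bipartite graph `G` with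
bipartition `(A, B)` has a subgraph `G'` with bipartition `(A', B')`, `A' ⊆ A`, `B' ⊆ B`,
with at least half of the edges, in which every vertex of `A'` has degree at least
`d_A(G)/4 = e(G)/(4|A|)` and every vertex of `B'` has degree at least `d_B(G)/4 = e(G)/(4|B|)`. -/
theorem bipartite_min_degree_subgraph {V : Type*} [Fintype V] [DecidableEq V]
    (G : SimpleGraph V) (A B : Finset V)
    (hdisj : Disjoint A B) (hcover : A ∪ B = Finset.univ)
    (hbip : ∀ u w : V, G.Adj u w → (u ∈ A ∧ w ∈ B) ∨ (u ∈ B ∧ w ∈ A)) :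
    ∃ (A' B' : Finset V) (G' : G.Subgraph),
      A' ⊆ A ∧ B' ⊆ B ∧ G'.verts = ↑(A' ∪ B') ∧
      (G.edgeSet.ncard : ℝ) / 2 ≤ (G'.edgeSet.ncard : ℝ) ∧
      (∀ a ∈ A', (1 / 4 : ℝ) * ((G.edgeSet.ncard : ℝ) / (A.card : ℝ)) ≤
        ((G'.neighborSet a).ncard : ℝ)) ∧
      (∀ b ∈ B', (1 / 4 : ℝ) * ((G.edgeSet.ncard : ℝ) / (B.card : ℝ)) ≤
        ((G'.neighborSet b).ncard : ℝ)) :=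
  bipartite_min_degree_subgraph_general G A B hdisj hcover
end

section
/- Let p be a positive integer and let G be a bipartite graph with bipartition (A, B). Let d_A, d_B denote the average degrees of vertices in A and in B, respectively, and suppose d_A, d_B ≥ 8p. Then the number of paths of length 2p+1 in G is at least (1/2^{6p+1})·e(G)·(d_A·d_B)^p. -/
/-- `S` is the edge set of a path of length `ℓ` in `G`: there are distinct vertices
`v 0, …, v ℓ` with consecutive vertices adjacent, and `S` consists of the `ℓ` edges. -/
def IsPathEdges {V : Type*} (G : SimpleGraph V) (ℓ : ℕ) (S : Set (Sym2 V)) : Prop :=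
  ∃ v : ℕ → V, Set.InjOn v (Set.Iic ℓ) ∧
    (∀ i < ℓ, G.Adj (v i) (v (i + 1))) ∧
    S = (fun i => s(v i, v (i + 1))) '' Set.Iio ℓ

/-- The number of paths of length `ℓ` in `G` (counted as unordered subgraphs, i.e. by their
edge sets). -/
noncomputable def pathCount {V : Type*} (G : SimpleGraph V) (ℓ : ℕ) : ℕ :=
  Set.ncard {S : Set (Sym2 V) | IsPathEdges G ℓ S}

/-!
Deleting vertices of `A` with fewer than `d_A/4` neighbours and vertices of `B` with fewer than
`d_B/4` neighbours, one at a time, destroys at most `d_A|A|/4 + d_B|B|/4 = e(G)/2` edges and leaves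
a core in which every vertex of `A` has at least `d_A/4` neighbours in `B` and vice versa. Starting
from one of its at least `e(G)/2` edges, oriented from `A` to `B`, a path grows greedily: at each of
the `2p` further steps the current end has at most `p` neighbours already on the path, hence at
least `d/4 - p ≥ d/8` fresh ones. This gives `e(G)/2 · (d_A d_B/64)^p` vertex sequences, and since
a path of odd length has exactly one end in `A`, distinct sequences span distinct paths.
-/

section PathEdges

variable {V : Type*} {v w : ℕ → V} {ℓ : ℕ}

def pathEdges (v : ℕ → V) (ℓ : ℕ) : Set (Sym2 V) := (fun i => s(v i, v (i + 1))) '' Set.Iio ℓ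

theorem injOn_comp_clamp {q : Fin (ℓ + 1) → V} (hq : Function.Injective q) :
    Set.InjOn (fun n => q (Fin.clamp n ℓ)) (Set.Iic ℓ) := fun i hi j hj h => by
  have := congrArg Fin.val (hq h)
  simp only [Fin.coe_clamp, Set.mem_Iic] at this hi hj
  omega

theorem eqOn_of_pathEdges_eq_of_map_zero (hv : Set.InjOn v (Set.Iic ℓ))
    (hw : Set.InjOn w (Set.Iic ℓ)) (h : pathEdges v ℓ = pathEdges w ℓ) (h0 : v 0 = w 0) :
    Set.EqOn v w (Set.Iic ℓ) := by
  suffices ∀ i ≤ ℓ, ∀ j ≤ i, v j = w j from fun i hi => this i hi i le_rfl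
  intro i
  induction i with
  | zero => intro _ j hj; rwa [Nat.le_zero.mp hj]
  | succ i ih =>
    intro hi j hj
    rcases Nat.le_succ_iff.mp hj with hj | rfl
    · exact ih (by omega) j hj
    have hedge : s(v i, v (i + 1)) ∈ pathEdges w ℓ := h ▸ ⟨i, by grind, rfl⟩
    obtain ⟨m, hm, hvw⟩ := hedge
    simp only [Set.mem_Iio] at hm
    have hvi := ih (by omega) i le_rfl
    rcases Sym2.eq_iff.mp hvw with ⟨h₁, h₂⟩ | ⟨h₁, h₂⟩
    · obtain rfl : m = i := hw (by grind) (by grind) (h₁.trans hvi)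
      exact h₂.symm
    · -- the edge would run backwards, so `v (i + 1) = w (i - 1) = v (i - 1)`
      obtain rfl : m + 1 = i := hw (by grind) (by grind) (h₂.trans hvi)
      have := hv (x₁ := m) (x₂ := m + 2) (by grind) (by grind)
        ((ih (by omega) m (by omega)).trans h₁)
      omega

theorem eq_or_eq_of_unique_mem_pathEdges (hw : Set.InjOn w (Set.Iic ℓ)) {x : V} {e : Sym2 V}
    (he : e ∈ pathEdges w ℓ) (hx : x ∈ e) (huniq : ∀ e' ∈ pathEdges w ℓ, x ∈ e' → e' = e) :
    x = w 0 ∨ x = w ℓ := by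
  obtain ⟨m, hm, rfl⟩ := he
  simp only [Set.mem_Iio] at hm
  obtain ⟨n, hn, rfl⟩ : ∃ n ≤ ℓ, x = w n := by
    rcases Sym2.mem_iff.mp hx with rfl | rfl
    exacts [⟨m, by omega, rfl⟩, ⟨m + 1, by omega, rfl⟩]
  by_contra! hmid
  obtain ⟨k, rfl⟩ : ∃ k, n = k + 1 := ⟨n - 1, by grind⟩
  have hk : k + 1 < ℓ := lt_of_le_of_ne hn (by grind)
  -- an interior vertex lies on two distinct edges, the ones before and after it
  have hsame : s(w k, w (k + 1)) = s(w (k + 1), w (k + 2)) :=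
    (huniq _ ⟨k, by grind, rfl⟩ (Sym2.mem_mk_right _ _)).trans
      (huniq _ ⟨k + 1, by grind, rfl⟩ (Sym2.mem_mk_left _ _)).symm
  rcases Sym2.eq_iff.mp hsame with ⟨h₁, -⟩ | ⟨h₁, -⟩
  · have := hw (by grind) (by grind) h₁; omega
  · have := hw (by grind) (by grind) h₁; omega

theorem eq_of_map_zero_mem_pathEdges (hv : Set.InjOn v (Set.Iic ℓ)) {e : Sym2 V}
    (he : e ∈ pathEdges v ℓ) (h0 : v 0 ∈ e) : e = s(v 0, v 1) := by
  obtain ⟨i, hi, rfl⟩ := he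
  simp only [Set.mem_Iio] at hi
  rcases Sym2.mem_iff.mp h0 with h | h
  · obtain rfl : 0 = i := hv (by simp) (by grind) h
    rfl
  · have := hv (by simp) (by grind) h; omega

theorem eqOn_of_pathEdges_eq (hv : Set.InjOn v (Set.Iic ℓ)) (hw : Set.InjOn w (Set.Iic ℓ))
    (h : pathEdges v ℓ = pathEdges w ℓ) (hℓ : 0 < ℓ) (hend : v 0 ≠ w ℓ) :
    Set.EqOn v w (Set.Iic ℓ) := by
  have hfirst : s(v 0, v 1) ∈ pathEdges v ℓ := ⟨0, hℓ, rfl⟩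
  -- `v 0` lies on a single edge, so it is an end of the path `w` too
  have hleaf := eq_or_eq_of_unique_mem_pathEdges hw (h ▸ hfirst) (Sym2.mem_mk_left _ _)
    fun e he h0 => eq_of_map_zero_mem_pathEdges hv (h ▸ he) h0
  exact eqOn_of_pathEdges_eq_of_map_zero hv hw h (hleaf.resolve_right hend)

end PathEdges

namespace SimpleGraph

open Finset
open scoped Classical

variable {V : Type*}

section Core

variable [Fintype V] (G : SimpleGraph V)

theorem card_edgeFinset_inter_sym2_le_erase (S : Finset V) (v : V) :
    #(G.edgeFinset ∩ S.sym2) ≤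
      #(G.edgeFinset ∩ (S.erase v).sym2) + #(G.neighborFinset v ∩ S) := by
  have hsub : G.edgeFinset ∩ S.sym2 ⊆
      G.edgeFinset ∩ (S.erase v).sym2 ∪ (G.neighborFinset v ∩ S).image (s(v, ·)) := by
    intro e he
    rw [mem_inter, mem_sym2_iff, mem_edgeFinset] at he
    by_cases hv : v ∈ e
    · obtain ⟨w, rfl⟩ := Sym2.mem_iff_exists.mp hv
      refine mem_union_right _ (mem_image.mpr ⟨w, mem_inter.mpr ⟨?_, ?_⟩, rfl⟩)
      · exact (mem_neighborFinset ..).mpr he.1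
      · exact he.2 w (Sym2.mem_mk_right _ _)
    · refine mem_union_left _ (mem_inter.mpr ⟨mem_edgeFinset.mpr he.1, ?_⟩)
      exact mem_sym2_iff.mpr fun x hx => mem_erase.mpr ⟨fun h => hv (h ▸ hx), he.2 x hx⟩
  calc _ ≤ _ := card_le_card hsub
    _ ≤ _ := card_union_le _ _
    _ ≤ _ := by gcongr; exact card_image_le

/-- A smallest `S` within the edge budget has no vertex below threshold: deleting such a vertex
would lose fewer than `f v` edges and so stay within budget. -/
theorem exists_subset_threshold_le_degree (f : V → ℝ) :
    ∃ S : Finset V, (#G.edgeFinset : ℝ) - ∑ v ∈ Sᶜ, f v ≤ #(G.edgeFinset ∩ S.sym2) ∧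
      ∀ v ∈ S, f v ≤ #(G.neighborFinset v ∩ S) := by
  set good := fun S : Finset V => (#G.edgeFinset : ℝ) - ∑ v ∈ Sᶜ, f v ≤ #(G.edgeFinset ∩ S.sym2)
  obtain ⟨S, hS, hmin⟩ := exists_min_image {S | good S} card ⟨univ, by simp [good]⟩
  rw [mem_filter] at hS
  refine ⟨S, hS.2, fun v hv => ?_⟩
  by_contra! hlow
  have hgood : good (S.erase v) := by
    have hcut : (#(G.edgeFinset ∩ S.sym2) : ℝ) ≤
        #(G.edgeFinset ∩ (S.erase v).sym2) + #(G.neighborFinset v ∩ S) := by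
      exact_mod_cast G.card_edgeFinset_inter_sym2_le_erase S v
    have hS' := hS.2
    simp only [good, compl_erase, sum_insert (notMem_compl.mpr hv)] at hS' ⊢
    linarith
  exact (card_erase_lt_of_mem hv).not_ge (hmin _ (mem_filter.mpr ⟨mem_univ _, hgood⟩))

theorem neighborFinset_inter_subset_filter_mem {A B : Set V} (hAB : Disjoint A B)
    (hbip : ∀ u w : V, G.Adj u w → (u ∈ A ∧ w ∈ B) ∨ (u ∈ B ∧ w ∈ A)) {v : V} (hv : v ∈ A)
    (S : Finset V) : G.neighborFinset v ∩ S ⊆ G.neighborFinset v ∩ {w ∈ S | w ∈ B} := by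
  intro w hw
  rw [mem_inter, mem_neighborFinset] at hw
  have hwB : w ∈ B := ((hbip v w hw.1).resolve_right fun h => Set.disjoint_left.mp hAB hv h.1).2
  exact mem_inter.mpr ⟨(mem_neighborFinset ..).mpr hw.1, mem_filter.mpr ⟨hw.2, hwB⟩⟩

end Core

section AlternatingSide

def alternatingSide (A B : Finset V) (i : ℕ) : Finset V := if Even i then A else B

variable {A B : Finset V}

theorem even_iff_of_mem_alternatingSide (hAB : Disjoint A B) {x : V} {i j : ℕ}
    (hi : x ∈ alternatingSide A B i) (hj : x ∈ alternatingSide A B j) : Even i ↔ Even j := by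
  unfold alternatingSide at hi hj
  by_cases h₁ : Even i <;> by_cases h₂ : Even j <;> simp only [h₁, h₂, if_true, if_false] at hi hj
  · simp [h₁, h₂]
  · exact absurd hj (Finset.disjoint_left.mp hAB hi)
  · exact absurd hi (Finset.disjoint_left.mp hAB hj)
  · simp [h₁, h₂]

theorem card_image_inter_alternatingSide_le (hAB : Disjoint A B) {k p : ℕ} (hk : k ≤ 2 * p)
    {q : Fin (k + 1) → V} (hq : ∀ i : Fin (k + 1), q i ∈ alternatingSide A B i) :
    #(univ.image q ∩ alternatingSide A B (k + 1)) ≤ p := by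
  have hsub : univ.image q ∩ alternatingSide A B (k + 1) ⊆
      ({i : Fin (k + 1) | Even (i : ℕ) ↔ Even (k + 1)} : Finset _).image q := by
    intro x hx
    obtain ⟨hx, hside⟩ := mem_inter.mp hx
    obtain ⟨i, -, rfl⟩ := mem_image.mp hx
    exact mem_image_of_mem q
      (mem_filter.mpr ⟨mem_univ _, even_iff_of_mem_alternatingSide hAB (hq i) hside⟩)
  refine (card_le_card hsub).trans (card_image_le.trans ?_)
  refine le_trans (b := #(range p)) ?_ (card_range p).le
  apply card_le_card_of_injOn (fun i : Fin (k + 1) => (i : ℕ) / 2)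
  · intro i hi
    simp only [mem_coe, mem_filter, mem_univ, true_and, Nat.even_iff] at hi
    simp only [mem_coe, mem_range]
    omega
  · intro i hi j hj hij
    simp only [mem_coe, mem_filter, mem_univ, true_and, Nat.even_iff] at hi hj hij
    omega

end AlternatingSide

section AlternatingPaths

variable [Fintype V] (G : SimpleGraph V)

noncomputable def alternatingPaths (A B : Finset V) (k : ℕ) : Finset (Fin (k + 1) → V) :=
  {q | Function.Injective q ∧ (∀ i : Fin k, G.Adj (q i.castSucc) (q i.succ)) ∧
    ∀ i : Fin (k + 1), q i ∈ alternatingSide A B i}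

variable {G} {A B : Finset V}

theorem mem_alternatingPaths {k : ℕ} {q : Fin (k + 1) → V} :
    q ∈ G.alternatingPaths A B k ↔ Function.Injective q ∧
      (∀ i : Fin k, G.Adj (q i.castSucc) (q i.succ)) ∧
      ∀ i : Fin (k + 1), q i ∈ alternatingSide A B i := by
  simp [alternatingPaths]

theorem snoc_mem_alternatingPaths {k : ℕ} {q : Fin (k + 1) → V}
    (hq : q ∈ G.alternatingPaths A B k) {w : V} (hadj : G.Adj (q (Fin.last k)) w)
    (hside : w ∈ alternatingSide A B (k + 1)) (hnew : w ∉ Set.range q) :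
    Fin.snoc q w ∈ G.alternatingPaths A B (k + 1) := by
  obtain ⟨hinj, hpath, hsides⟩ := mem_alternatingPaths.mp hq
  refine mem_alternatingPaths.mpr
    ⟨Fin.snoc_injective_iff.mpr ⟨hinj, hnew⟩, fun i => ?_, fun i => ?_⟩
  · induction i using Fin.lastCases with
    | last => simpa using hadj
    | cast j =>
      rw [Fin.succ_castSucc, Fin.snoc_castSucc, Fin.snoc_castSucc]
      exact hpath j
  · induction i using Fin.lastCases with
    | last => simpa using hside
    | cast j => simpa using hsides j

theorem le_card_neighborFinset_inter_alternatingSide_sdiff (hAB : Disjoint A B) {k p : ℕ}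
    (hk : k ≤ 2 * p) {c : ℝ}
    (hdeg : ∀ v ∈ alternatingSide A B k,
      c + p ≤ #(G.neighborFinset v ∩ alternatingSide A B (k + 1)))
    {q : Fin (k + 1) → V} (hq : q ∈ G.alternatingPaths A B k) :
    c ≤ #((G.neighborFinset (q (Fin.last k)) ∩ alternatingSide A B (k + 1)) \ univ.image q) := by
  obtain ⟨-, -, hsides⟩ := mem_alternatingPaths.mp hq
  set N := G.neighborFinset (q (Fin.last k)) ∩ alternatingSide A B (k + 1)
  have hN := hdeg _ (by simpa using hsides (Fin.last k))
  have hused : (#(N ∩ univ.image q) : ℝ) ≤ p := by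
    exact_mod_cast (card_le_card (by grind)).trans
      (card_image_inter_alternatingSide_le hAB hk hsides)
  have hsplit : (#(N \ univ.image q) : ℝ) + #(N ∩ univ.image q) = #N := by
    exact_mod_cast card_sdiff_add_card_inter N (univ.image q)
  linarith

theorem mul_card_alternatingPaths_le (hAB : Disjoint A B) {k p : ℕ} (hk : k ≤ 2 * p) {c : ℝ}
    (hdeg : ∀ v ∈ alternatingSide A B k,
      c + p ≤ #(G.neighborFinset v ∩ alternatingSide A B (k + 1))) :
    c * #(G.alternatingPaths A B k) ≤ #(G.alternatingPaths A B (k + 1)) := by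
  -- double count the pairs `(q, q')` with `q'` extending `q`
  have hcount := card_nsmul_le_card_nsmul (s := G.alternatingPaths A B k)
    (t := G.alternatingPaths A B (k + 1)) (fun q q' => Fin.init q' = q) (m := c) (n := (1 : ℝ))
    ?_ ?_
  · simpa [nsmul_eq_mul, mul_comm] using hcount
  · intro q hq
    set W := (G.neighborFinset (q (Fin.last k)) ∩ alternatingSide A B (k + 1)) \ univ.image q
    have hsnoc : Function.Injective fun w => (Fin.snoc q w : Fin (k + 2) → V) :=
      fun w₁ w₂ h => by simpa using congrFun h (Fin.last (k + 1))
    have hext : W.image (fun w => (Fin.snoc q w : Fin (k + 2) → V)) ⊆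
        (G.alternatingPaths A B (k + 1)).bipartiteAbove (fun q q' => Fin.init q' = q) q := by
      intro q' hq'
      obtain ⟨w, hw, rfl⟩ := mem_image.mp hq'
      simp only [W, mem_sdiff, mem_inter, mem_neighborFinset, mem_image, mem_univ, true_and] at hw
      exact mem_filter.mpr ⟨snoc_mem_alternatingPaths hq hw.1.1 hw.1.2 hw.2, Fin.init_snoc _ _⟩
    calc c ≤ #W := le_card_neighborFinset_inter_alternatingSide_sdiff hAB hk hdeg hq
      _ = #(W.image (fun w => (Fin.snoc q w : Fin (k + 2) → V))) := by
        exact_mod_cast (card_image_of_injective W hsnoc).symm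
      _ ≤ _ := by exact_mod_cast card_le_card hext
  · intro q' _
    have : (G.alternatingPaths A B k).bipartiteBelow (fun q q' => Fin.init q' = q) q' ⊆
        {Fin.init q'} := fun q hq => mem_singleton.mpr (mem_filter.mp hq).2.symm
    exact_mod_cast (card_le_card this).trans (card_singleton _).le

theorem mul_pow_le_card_alternatingPaths (hAB : Disjoint A B) {p : ℕ} {a b : ℝ}
    (ha : 0 ≤ a) (hb : 0 ≤ b) (hdegA : ∀ v ∈ A, a + p ≤ #(G.neighborFinset v ∩ B))
    (hdegB : ∀ v ∈ B, b + p ≤ #(G.neighborFinset v ∩ A)) {j : ℕ} (hj : j ≤ p) :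
    #(G.alternatingPaths A B 1) * (a * b) ^ j ≤ #(G.alternatingPaths A B (2 * j + 1)) := by
  induction j with
  | zero => simp
  | succ j ih =>
    have hB : alternatingSide A B (2 * j + 1) = B := by simp [alternatingSide, parity_simps]
    have hA : alternatingSide A B (2 * j + 2) = A := by simp [alternatingSide, parity_simps]
    have hB' : alternatingSide A B (2 * j + 3) = B := by simp [alternatingSide, parity_simps]
    have hstepB := mul_card_alternatingPaths_le (k := 2 * j + 1) (p := p) hAB (by omega)
      (c := b) (by rw [hB, hA]; exact hdegB)
    have hstepA := mul_card_alternatingPaths_le (k := 2 * j + 2) (p := p) hAB (by omega)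
      (c := a) (by rw [hA, hB']; exact hdegA)
    calc _ = a * (b * (#(G.alternatingPaths A B 1) * (a * b) ^ j)) := by ring
      _ ≤ a * (b * #(G.alternatingPaths A B (2 * j + 1))) := by gcongr; exact ih (by omega)
      _ ≤ a * #(G.alternatingPaths A B (2 * j + 2)) := by gcongr
      _ ≤ _ := hstepA

theorem pair_mem_alternatingPaths_one {x y : V} (hxy : G.Adj x y) (hx : x ∈ A) (hy : y ∈ B) :
    ![x, y] ∈ G.alternatingPaths A B 1 := by
  refine mem_alternatingPaths.mpr ⟨injective_pair_iff_ne.mpr hxy.ne, fun i => ?_, fun i => ?_⟩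
  · fin_cases i
    simpa using hxy
  · fin_cases i <;> simpa [alternatingSide]

theorem isPathEdges_of_mem_alternatingPaths {ℓ : ℕ} {q : Fin (ℓ + 1) → V}
    (hq : q ∈ G.alternatingPaths A B ℓ) :
    IsPathEdges G ℓ (pathEdges (fun n => q (Fin.clamp n ℓ)) ℓ) := by
  obtain ⟨hinj, hadj, -⟩ := mem_alternatingPaths.mp hq
  refine ⟨_, injOn_comp_clamp hinj, fun i hi => ?_, rfl⟩
  convert hadj ⟨i, hi⟩ using 2 <;> ext <;> simp <;> omega

theorem injOn_pathEdges_alternatingPaths (hAB : Disjoint A B) {ℓ : ℕ} (hℓ : Odd ℓ) :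
    Set.InjOn (fun q : Fin (ℓ + 1) → V => pathEdges (fun n => q (Fin.clamp n ℓ)) ℓ)
      (G.alternatingPaths A B ℓ) := by
  intro q hq r hr h
  obtain ⟨hq_inj, -, hq_side⟩ := mem_alternatingPaths.mp hq
  obtain ⟨hr_inj, -, hr_side⟩ := mem_alternatingPaths.mp hr
  have hend : q (Fin.clamp 0 ℓ) ≠ r (Fin.clamp ℓ ℓ) := fun heq => by
    have := even_iff_of_mem_alternatingSide hAB (hq_side _) (heq ▸ hr_side _)
    simp only [Fin.coe_clamp, zero_le, inf_of_le_left, Even.zero, min_self, true_iff] at this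
    exact Nat.not_even_iff_odd.mpr hℓ this
  have hagree := eqOn_of_pathEdges_eq (injOn_comp_clamp hq_inj) (injOn_comp_clamp hr_inj) h
    hℓ.pos hend
  funext i
  have hi : Fin.clamp i ℓ = i := Fin.ext (by simp [Fin.is_le])
  simpa [hi] using hagree (Set.mem_Iic.mpr (Fin.is_le i))

theorem card_alternatingPaths_le_pathCount (hAB : Disjoint A B) {ℓ : ℕ} (hℓ : Odd ℓ) :
    #(G.alternatingPaths A B ℓ) ≤ pathCount G ℓ := by
  rw [pathCount, ← Set.ncard_coe_finset]
  exact Set.ncard_le_ncard_of_injOn _ (fun q hq => isPathEdges_of_mem_alternatingPaths hq)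
    (injOn_pathEdges_alternatingPaths hAB hℓ)

end AlternatingPaths

section Bipartite

variable [Fintype V] (G : SimpleGraph V) {A B : Set V}

theorem card_edgeFinset_inter_sym2_le_card_alternatingPaths_one
    (hbip : ∀ u w : V, G.Adj u w → (u ∈ A ∧ w ∈ B) ∨ (u ∈ B ∧ w ∈ A)) (S : Finset V) :
    #(G.edgeFinset ∩ S.sym2) ≤ #(G.alternatingPaths {v ∈ S | v ∈ A} {v ∈ S | v ∈ B} 1) := by
  refine card_le_card_of_surjOn (fun q => s(q 0, q 1)) fun e he => ?_
  rw [mem_coe, mem_inter, mem_edgeFinset, mem_sym2_iff] at he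
  induction e using Sym2.ind with
  | _ x y =>
    obtain ⟨hxy, hS⟩ := he
    have hx : x ∈ S := hS x (Sym2.mem_mk_left _ _)
    have hy : y ∈ S := hS y (Sym2.mem_mk_right _ _)
    rcases hbip x y hxy with ⟨hxA, hyB⟩ | ⟨hxB, hyA⟩
    · exact ⟨![x, y], pair_mem_alternatingPaths_one hxy (by simp [hx, hxA]) (by simp [hy, hyB]),
        rfl⟩
    · exact ⟨![y, x], pair_mem_alternatingPaths_one hxy.symm (by simp [hy, hyA])
        (by simp [hx, hxB]), Sym2.eq_swap⟩

theorem exists_bipartite_core (hAB : Disjoint A B)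
    (hbip : ∀ u w : V, G.Adj u w → (u ∈ A ∧ w ∈ B) ∨ (u ∈ B ∧ w ∈ A)) {a b : ℝ} (ha : 0 ≤ a)
    (hb : 0 ≤ b) :
    ∃ A' B' : Finset V, Disjoint A' B' ∧
      (G.edgeSet.ncard : ℝ) - a * A.ncard - b * B.ncard ≤ #(G.alternatingPaths A' B' 1) ∧
      (∀ v ∈ A', a ≤ #(G.neighborFinset v ∩ B')) ∧ ∀ v ∈ B', b ≤ #(G.neighborFinset v ∩ A') := by
  set f : V → ℝ := fun v => (if v ∈ A then a else 0) + (if v ∈ B then b else 0)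
  obtain ⟨S, hedges, hdeg⟩ := G.exists_subset_threshold_le_degree f
  have hf : ∑ v ∈ Sᶜ, f v ≤ a * A.ncard + b * B.ncard := calc
    _ ≤ ∑ v, f v := sum_le_univ_sum_of_nonneg fun v => by positivity
    _ = _ := by
      simp only [f, sum_add_distrib, sum_ite, sum_const, nsmul_eq_mul,
        Set.ncard_eq_toFinset_card', Set.toFinset_card, Fintype.card_ofFinset]
      ring
  have hbip_symm : ∀ u w : V, G.Adj u w → (u ∈ B ∧ w ∈ A) ∨ (u ∈ A ∧ w ∈ B) :=
    fun u w h => (hbip u w h).symm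
  refine ⟨{v ∈ S | v ∈ A}, {v ∈ S | v ∈ B}, ?_, ?_, fun v hv => ?_, fun v hv => ?_⟩
  · exact Finset.disjoint_left.mpr fun v h₁ h₂ =>
      Set.disjoint_left.mp hAB (mem_filter.mp h₁).2 (mem_filter.mp h₂).2
  · have hbase : (#(G.edgeFinset ∩ S.sym2) : ℝ) ≤
        #(G.alternatingPaths {v ∈ S | v ∈ A} {v ∈ S | v ∈ B} 1) := by
      exact_mod_cast G.card_edgeFinset_inter_sym2_le_card_alternatingPaths_one hbip S
    rw [← coe_edgeFinset, Set.ncard_coe_finset]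
    linarith
  · rw [mem_filter] at hv
    calc a ≤ f v := by simp only [f, hv.2, ↓reduceIte, le_add_iff_nonneg_right]; positivity
      _ ≤ _ := hdeg v hv.1
      _ ≤ _ := by
        exact_mod_cast card_le_card (G.neighborFinset_inter_subset_filter_mem hAB hbip hv.2 S)
  · rw [mem_filter] at hv
    calc b ≤ f v := by simp only [f, hv.2, ↓reduceIte, le_add_iff_nonneg_left]; positivity
      _ ≤ _ := hdeg v hv.1
      _ ≤ _ := by
        exact_mod_cast card_le_card
          (G.neighborFinset_inter_subset_filter_mem hAB.symm hbip_symm hv.2 S)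

end Bipartite

end SimpleGraph

theorem path_count_bipartite_general {V : Type*} [Fintype V] (p : ℕ) (hp : 1 ≤ p)
    (G : SimpleGraph V) (A B : Set V)
    (hdisj : Disjoint A B)
    (hbip : ∀ u w : V, G.Adj u w → (u ∈ A ∧ w ∈ B) ∨ (u ∈ B ∧ w ∈ A))
    (hA : (8 * p : ℝ) ≤ (G.edgeSet.ncard : ℝ) / (A.ncard : ℝ))
    (hB : (8 * p : ℝ) ≤ (G.edgeSet.ncard : ℝ) / (B.ncard : ℝ)) :
    (1 / 2 ^ (6 * p + 1) : ℝ) * (G.edgeSet.ncard : ℝ) *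
        (((G.edgeSet.ncard : ℝ) / (A.ncard : ℝ)) * ((G.edgeSet.ncard : ℝ) / (B.ncard : ℝ))) ^ p ≤
      (pathCount G (2 * p + 1) : ℝ) := by
  set e : ℝ := (G.edgeSet.ncard : ℝ)
  set dA := e / A.ncard
  set dB := e / B.ncard
  have hp' : (1 : ℝ) ≤ p := by exact_mod_cast hp
  have heA : dA * A.ncard = e := div_mul_cancel₀ _ fun h => by simp only [dA, h, div_zero] at hA; linarith
  have heB : dB * B.ncard = e := div_mul_cancel₀ _ fun h => by simp only [dB, h, div_zero] at hB; linarith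
  obtain ⟨A', B', hAB', hbase, hdegA, hdegB⟩ :=
    G.exists_bipartite_core hdisj hbip (a := dA / 4) (b := dB / 4) (by linarith) (by linarith)
  have hpaths := G.mul_pow_le_card_alternatingPaths hAB' (p := p) (a := dA / 8) (b := dB / 8)
    (by linarith) (by linarith) (fun v hv => by linarith [hdegA v hv])
    (fun v hv => by linarith [hdegB v hv]) le_rfl
  have hconst : ∀ x y : ℝ,
      (1 / 2 ^ (6 * p + 1) : ℝ) * e * (x * y) ^ p = e / 2 * (x / 8 * (y / 8)) ^ p := by
    intro x y
    rw [div_mul_div_comm, div_pow, pow_succ, pow_mul]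
    norm_num
    field_simp
  calc (1 / 2 ^ (6 * p + 1) : ℝ) * e * (dA * dB) ^ p
      = e / 2 * (dA / 8 * (dB / 8)) ^ p := hconst dA dB
    _ ≤ (G.alternatingPaths A' B' 1).card * (dA / 8 * (dB / 8)) ^ p := by gcongr; linarith
    _ ≤ (G.alternatingPaths A' B' (2 * p + 1)).card := hpaths
    _ ≤ pathCount G (2 * p + 1) := by
      exact_mod_cast G.card_alternatingPaths_le_pathCount hAB' (odd_two_mul_add_one p)

/-- **Path-counting lemma.** If `G` is bipartite with bipartition `(A, B)` and the average
degrees `d_A = e(G)/|A|` and `d_B = e(G)/|B|` are both at least `8p`, then `G` contains at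
least `2^{-(6p+1)}·e(G)·(d_A·d_B)^p` paths of length `2p + 1`. -/
theorem path_count_bipartite {V : Type*} [Fintype V] (p : ℕ) (hp : 1 ≤ p)
    (G : SimpleGraph V) (A B : Set V)
    (hdisj : Disjoint A B) (hcover : A ∪ B = Set.univ)
    (hbip : ∀ u w : V, G.Adj u w → (u ∈ A ∧ w ∈ B) ∨ (u ∈ B ∧ w ∈ A))
    (hA : (8 * p : ℝ) ≤ (G.edgeSet.ncard : ℝ) / (A.ncard : ℝ))
    (hB : (8 * p : ℝ) ≤ (G.edgeSet.ncard : ℝ) / (B.ncard : ℝ)) :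
    (1 / 2 ^ (6 * p + 1) : ℝ) * (G.edgeSet.ncard : ℝ) *
        (((G.edgeSet.ncard : ℝ) / (A.ncard : ℝ)) * ((G.edgeSet.ncard : ℝ) / (B.ncard : ℝ))) ^ p ≤
      (pathCount G (2 * p + 1) : ℝ) :=
  path_count_bipartite_general p hp G A B hdisj hbip hA hB
end

section
/- Given a positive real D, γ ∈ (0,1), and integers k, r ≥ 2, there exists n₀ = n₀(D, k, r, γ) such that for all n ≥ n₀ the following holds: if G is a linear r-partite r-graph two of whose r-partition classes, A and B, satisfy |A ∪ B| = n and |L_G(v)| ≥ D·n^γ for every v ∈ A ∪ B, then there exists a partition of V(G) into S₁, S₂, …, S_k such that for every v ∈ A ∪ B and every i ∈ [k], the number of edges of the link L_G(v) entirely contained in S_i is at least D·n^γ/(2·k^{r−1}). -/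
open Finset

variable {V : Type*}

/-- `G` is an `r`-uniform hypergraph (an `r`-graph): every edge has exactly `r` vertices. -/
def IsUniform (G : Finset (Finset V)) (r : ℕ) : Prop := ∀ e ∈ G, e.card = r

/-- A hypergraph is linear if any two distinct edges share at most one vertex. -/
def IsLinear [DecidableEq V] (G : Finset (Finset V)) : Prop :=
  ∀ e ∈ G, ∀ f ∈ G, e ≠ f → (e ∩ f).card ≤ 1

/-- `G` is `r`-partite with vertex classes `A 0, …, A (r-1)`: the classes partition the vertex
set and every edge meets each class in exactly one vertex. -/
def IsPartite [DecidableEq V] {r : ℕ} (G : Finset (Finset V)) (A : Fin r → Finset V) : Prop :=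
  (∀ x : V, ∃! i, x ∈ A i) ∧ ∀ e ∈ G, ∀ i, (e ∩ A i).card = 1

/-- The degree of a vertex in a hypergraph (the size of its link). -/
def hdeg [DecidableEq V] (G : Finset (Finset V)) (x : V) : ℕ :=
  (G.filter fun e => x ∈ e).card

/-- The projection of the edges of `G` onto the vertex set `B`; for `B = A i ∪ A j` this is the
`(i,j)`-projection of an `r`-partite `G`. -/
def proj [DecidableEq V] (G : Finset (Finset V)) (B : Finset V) : Finset (Finset V) :=
  G.image fun e => e ∩ B

/-- `S` is a copy of the `r`-expansion `F^{(r)}` of the `2`-graph `F` on `Fin v`: the vertices of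
`F` are embedded injectively and each edge `f` of `F` is extended by an `(r-2)`-set `I f` of
further vertices, these sets being pairwise disjoint and avoiding the embedded vertices. -/
def IsExpansionCopy [DecidableEq V] (r : ℕ) {v : ℕ} (F : Finset (Finset (Fin v)))
    (S : Finset (Finset V)) : Prop :=
  ∃ (φ : Fin v → V) (I : Finset (Fin v) → Finset V),
    Function.Injective φ ∧
    (∀ f ∈ F, (I f).card = r - 2) ∧
    (∀ f ∈ F, ∀ f' ∈ F, f ≠ f' → Disjoint (I f) (I f')) ∧
    (∀ f ∈ F, ∀ x : Fin v, φ x ∉ I f) ∧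
    S = F.image fun f => f.image φ ∪ I f

/-- The number of copies of the `r`-expansion of `F` in `G`. -/
noncomputable def expCount [DecidableEq V] (r : ℕ) {v : ℕ} (F : Finset (Finset (Fin v)))
    (G : Finset (Finset V)) : ℕ :=
  Set.ncard {S : Finset (Finset V) | S ⊆ G ∧ IsExpansionCopy r F S}

section splittingHelpers

lemma restrict_sum {W : Type} [Fintype W] [DecidableEq W] {k : ℕ} (i : Fin k)
    (b : Finset W) (F : (W → Fin k) → ℝ)
    (hF : ∀ f g : W → Fin k, (∀ x, x ∉ b → f x = g x) → F f = F g) :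
    ∑ f : W → Fin k, F f
      = (k : ℝ) ^ b.card * ∑ f : W → Fin k, (if ∀ x ∈ b, f x = i then F f else 0) := by
  classical
  set π : (W → Fin k) → (W → Fin k) := fun f x => if x ∈ b then i else f x with hπ
  have hπeq : ∀ f, F (π f) = F f := by
    intro f
    exact hF _ _ (fun x hx => by simp [hπ, if_neg hx])
  have h1 : ∑ f : W → Fin k, F f = ∑ f : W → Fin k, F (π f) := by
    exact Finset.sum_congr rfl (fun f _ => (hπeq f).symm)
  rw [h1, Finset.sum_comp F π]
  have himg : (Finset.univ.image π) = Finset.univ.filter (fun g : W → Fin k => ∀ x ∈ b, g x = i) := by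
    ext g
    simp only [mem_image, mem_univ, true_and, mem_filter]
    constructor
    · rintro ⟨f, rfl⟩ x hx
      simp [hπ, if_pos hx]
    · intro hg
      refine ⟨g, funext fun x => ?_⟩
      by_cases hx : x ∈ b
      · simp [hπ, if_pos hx, hg x hx]
      · simp [hπ, if_neg hx]
  have hfiber : ∀ g ∈ Finset.univ.filter (fun g : W → Fin k => ∀ x ∈ b, g x = i),
      (Finset.univ.filter fun f : W → Fin k => π f = g).card = k ^ b.card := by
    intro g hg
    rw [mem_filter] at hg
    have hg' := hg.2
    have hset : (Finset.univ.filter fun f : W → Fin k => π f = g)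
        = Finset.univ.filter fun f : W → Fin k => ∀ x, x ∉ b → f x = g x := by
      ext f
      simp only [mem_filter, mem_univ, true_and]
      constructor
      · rintro rfl x hx
        simp [hπ, if_neg hx]
      · intro hf
        funext x
        by_cases hx : x ∈ b
        · simp [hπ, if_pos hx, (hg' x hx).symm]
        · simp [hπ, if_neg hx, hf x hx]
    rw [hset]
    have : (Finset.univ.filter fun f : W → Fin k => ∀ x, x ∉ b → f x = g x).card
        = (Finset.univ : Finset (↥b → Fin k)).card := by
      apply Finset.card_bij' (fun f _ => fun x : ↥b => f x.1)
        (fun h _ => fun x => if hx : x ∈ b then h ⟨x, hx⟩ else g x)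
      · intros; exact mem_univ _
      · intro f hf; rw [mem_filter]; refine ⟨mem_univ _, fun x hx => by simp [dif_neg hx]⟩
      · intro f hf
        rw [mem_filter] at hf
        funext x
        by_cases hx : x ∈ b
        · simp [dif_pos hx]
        · simp [dif_neg hx, hf.2 x hx]
      · intro h hh
        funext x
        simp [dif_pos x.2]
    rw [this, Finset.card_univ]
    simp [Fintype.card_fun]
  rw [himg, Finset.sum_congr rfl (fun g hg => by rw [hfiber g hg]),
    ← Finset.smul_sum, Finset.sum_filter]
  simp [nsmul_eq_mul]

lemma sum_prod_weight{W : Type} [Fintype W] [DecidableEq W] {k : ℕ} (hk : 0 < k) (i : Fin k)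
    (B : Finset (Finset W)) (hd : ∀ b ∈ B, ∀ b' ∈ B, b ≠ b' → Disjoint b b') :
    ∑ f : W → Fin k, ∏ b ∈ B, (if ∀ x ∈ b, f x = i then (2⁻¹ : ℝ) else 1)
      = (k : ℝ) ^ (Fintype.card W) * ∏ b ∈ B, (1 - 2⁻¹ * ((k : ℝ) ^ b.card)⁻¹) := by
  classical
  induction B using Finset.cons_induction with
  | empty =>
      simp [Finset.card_univ, Fintype.card_fun]
  | cons b B' hb IH =>
      have hd' : ∀ c ∈ B', ∀ c' ∈ B', c ≠ c' → Disjoint c c' := fun c hc c' hc' h =>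
        hd c (mem_cons_of_mem hc) c' (mem_cons_of_mem hc') h
      have hdb : ∀ c ∈ B', Disjoint b c := by
        intro c hc
        exact hd b (mem_cons_self _ _) c (mem_cons_of_mem hc)
          (fun h => hb (h ▸ hc))
      set P : (W → Fin k) → ℝ := fun f => ∏ c ∈ B', (if ∀ x ∈ c, f x = i then (2⁻¹ : ℝ) else 1)
        with hP
      have hFdep : ∀ f g : W → Fin k, (∀ x, x ∉ b → f x = g x) → P f = P g := by
        intro f g hfg
        refine Finset.prod_congr rfl (fun c hc => ?_)
        have : (∀ x ∈ c, f x = i) ↔ (∀ x ∈ c, g x = i) := by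
          constructor <;> intro h x hx <;>
            [rw [← hfg x (Finset.disjoint_right.mp (hdb c hc) hx)];
             rw [hfg x (Finset.disjoint_right.mp (hdb c hc) hx)]] <;> exact h x hx
        simp only [this]
      have step : ∀ f : W → Fin k,
          (if ∀ x ∈ b, f x = i then (2⁻¹ : ℝ) else 1) * P f
            = P f - 2⁻¹ * (if ∀ x ∈ b, f x = i then P f else 0) := by
        intro f
        by_cases h : ∀ x ∈ b, f x = i
        · rw [if_pos h, if_pos h]; ring
        · rw [if_neg h, if_neg h]; ring
      calc ∑ f : W → Fin k, ∏ c ∈ Finset.cons b B' hb,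
              (if ∀ x ∈ c, f x = i then (2⁻¹ : ℝ) else 1)
          = ∑ f : W → Fin k, ((if ∀ x ∈ b, f x = i then (2⁻¹ : ℝ) else 1) * P f) := by
            refine Finset.sum_congr rfl (fun f _ => ?_)
            rw [Finset.prod_cons]
        _ = ∑ f : W → Fin k, (P f - 2⁻¹ * (if ∀ x ∈ b, f x = i then P f else 0)) := by
            exact Finset.sum_congr rfl (fun f _ => step f)
        _ = (∑ f : W → Fin k, P f) - 2⁻¹ * ∑ f : W → Fin k,
              (if ∀ x ∈ b, f x = i then P f else 0) := by
            rw [Finset.sum_sub_distrib, Finset.mul_sum]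
        _ = (1 - 2⁻¹ * ((k : ℝ) ^ b.card)⁻¹) * ∑ f : W → Fin k, P f := by
            have hkpow : ((k : ℝ) ^ b.card) ≠ 0 := by positivity
            have := restrict_sum i b P hFdep
            have h2 : ∑ f : W → Fin k, (if ∀ x ∈ b, f x = i then P f else 0)
                = ((k : ℝ) ^ b.card)⁻¹ * ∑ f : W → Fin k, P f := by
              field_simp
              linarith [this]
            rw [h2]; ring
        _ = (k : ℝ) ^ (Fintype.card W) * ∏ c ∈ Finset.cons b B' hb,
              (1 - 2⁻¹ * ((k : ℝ) ^ c.card)⁻¹) := by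
            rw [IH hd', Finset.prod_cons]; ring

lemma bad_count {W : Type} [Fintype W] [DecidableEq W] {k : ℕ} (hk : 0 < k) (i : Fin k)
    (B : Finset (Finset W)) (hd : ∀ b ∈ B, ∀ b' ∈ B, b ≠ b' → Disjoint b b') (t : ℝ) :
    ((Finset.univ.filter fun f : W → Fin k =>
        (((B.filter fun b => ∀ x ∈ b, f x = i).card : ℝ) < t)).card : ℝ) * (2 : ℝ) ^ (-t)
      ≤ (k : ℝ) ^ (Fintype.card W) * ∏ b ∈ B, (1 - 2⁻¹ * ((k : ℝ) ^ b.card)⁻¹) := by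
  classical
  have hprod : ∀ f : W → Fin k,
      ∏ b ∈ B, (if ∀ x ∈ b, f x = i then (2⁻¹ : ℝ) else 1)
        = (2⁻¹ : ℝ) ^ ((B.filter fun b => ∀ x ∈ b, f x = i).card) := by
    intro f
    rw [Finset.prod_ite, Finset.prod_const, Finset.prod_const, one_pow, mul_one]
  have key := sum_prod_weight hk i B hd
  rw [← key]
  have h1 : ((Finset.univ.filter fun f : W → Fin k =>
        (((B.filter fun b => ∀ x ∈ b, f x = i).card : ℝ) < t)).card : ℝ) * (2 : ℝ) ^ (-t)
      ≤ ∑ f ∈ (Finset.univ.filter fun f : W → Fin k =>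
        (((B.filter fun b => ∀ x ∈ b, f x = i).card : ℝ) < t)),
          ∏ b ∈ B, (if ∀ x ∈ b, f x = i then (2⁻¹ : ℝ) else 1) := by
    rw [show (((Finset.univ.filter fun f : W → Fin k =>
        (((B.filter fun b => ∀ x ∈ b, f x = i).card : ℝ) < t)).card : ℝ) * (2 : ℝ) ^ (-t))
      = ∑ _f ∈ (Finset.univ.filter fun f : W → Fin k =>
        (((B.filter fun b => ∀ x ∈ b, f x = i).card : ℝ) < t)), (2 : ℝ) ^ (-t) by
        rw [Finset.sum_const, nsmul_eq_mul]]
    refine Finset.sum_le_sum (fun f hf => ?_)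
    rw [Finset.mem_filter] at hf
    rw [hprod f]
    set X := (B.filter fun b => ∀ x ∈ b, f x = i).card with hX
    have h2 : (2⁻¹ : ℝ) ^ X = (2 : ℝ) ^ (-(X : ℝ)) := by
      rw [Real.rpow_neg (by norm_num), Real.rpow_natCast, inv_pow]
    rw [h2]
    exact Real.rpow_le_rpow_of_exponent_le one_le_two (by linarith [hf.2])
  refine h1.trans ?_
  refine Finset.sum_le_sum_of_subset_of_nonneg (Finset.filter_subset _ _) (fun f _ _ => ?_)
  exact Finset.prod_nonneg (fun b _ => by positivity)

end splittingHelpers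

/-- **Splitting lemma.** For `D > 0`, `γ ∈ (0,1)` and `k, r ≥ 2` there is `n₀` such that for all
`n ≥ n₀`: if `G` is a linear `r`-partite `r`-graph, two of whose partition classes `A i₀`, `A j₀`
satisfy `|A i₀ ∪ A j₀| = n` and `|L_G(v)| ≥ D n^γ` for every `v ∈ A i₀ ∪ A j₀`, then `V(G)` can
be partitioned into `S 0, …, S (k-1)` so that every such `v` has at least `D n^γ / (2 k^{r-1})`
link edges entirely inside each `S i`. -/
theorem splitting_lemma (D : ℝ) (hD : 0 < D) (γ : ℝ) (hγ0 : 0 < γ) (hγ1 : γ < 1)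
    (k r : ℕ) (hk : 2 ≤ k) (hr : 2 ≤ r) :
    ∃ n₀ : ℕ, ∀ n : ℕ, n₀ ≤ n →
      ∀ (W : Type) [Fintype W] [DecidableEq W]
        (G : Finset (Finset W)) (A : Fin r → Finset W),
        IsUniform G r → IsLinear G → IsPartite G A →
        ∀ i₀ j₀ : Fin r, i₀ ≠ j₀ →
          (A i₀ ∪ A j₀).card = n →
          (∀ v ∈ A i₀ ∪ A j₀, D * (n : ℝ) ^ γ ≤ (hdeg G v : ℝ)) →
          ∃ S : Fin k → Finset W,
            (∀ x : W, ∃! i : Fin k, x ∈ S i) ∧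
            ∀ v ∈ A i₀ ∪ A j₀, ∀ i : Fin k,
              D * (n : ℝ) ^ γ / (2 * (k : ℝ) ^ (r - 1)) ≤
                ((G.filter fun e => v ∈ e ∧ e \ {v} ⊆ S i).card : ℝ) := by
  classical
  have hk0 : (0 : ℝ) < k := by positivity
  have hk1 : (1 : ℝ) ≤ k := by exact_mod_cast Nat.one_le_of_lt hk
  set q : ℝ := (k : ℝ) ^ (r - 1) with hqdef
  have hq1 : 1 ≤ q := one_le_pow₀ hk1
  have hq0 : 0 < q := lt_of_lt_of_le one_pos hq1
  set c : ℝ := 2⁻¹ * q⁻¹ with hcdef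
  have hc0 : 0 < c := by positivity
  have hqi : q⁻¹ ≤ 1 := by
    have := inv_anti₀ one_pos hq1
    simpa using this
  have hc1 : c ≤ 2⁻¹ := by
    rw [hcdef]
    nlinarith [inv_pos.mpr hq0]
  set b : ℝ := (1 - Real.log 2) * (D * c) with hbdef
  have hb0 : 0 < b := by
    have hlog2 : Real.log 2 < 1 := by
      have := Real.log_two_lt_d9
      linarith
    have : 0 < D * c := by positivity
    nlinarith
  -- the analytic part : eventually n * k * exp (-(b * n^γ)) < 1
  have htendR : Filter.Tendsto (fun x : ℝ => (x ^ γ) ^ γ⁻¹ * Real.exp (-b * x ^ γ) * k)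
      Filter.atTop (nhds 0) := by
    have h1 : Filter.Tendsto (fun y : ℝ => y ^ γ⁻¹ * Real.exp (-b * y)) Filter.atTop (nhds 0) :=
      tendsto_rpow_mul_exp_neg_mul_atTop_nhds_zero γ⁻¹ b hb0
    have h2 : Filter.Tendsto (fun x : ℝ => x ^ γ) Filter.atTop Filter.atTop :=
      tendsto_rpow_atTop hγ0
    have := (h1.comp h2).mul_const (k : ℝ)
    simpa using this
  have htend : Filter.Tendsto (fun n : ℕ => (n : ℝ) * (k : ℝ) *
      Real.exp ((Real.log 2 - 1) * (b / (1 - Real.log 2) * (n : ℝ) ^ γ)))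
      Filter.atTop (nhds 0) := by
    have hcomp := htendR.comp (tendsto_natCast_atTop_atTop (R := ℝ))
    apply hcomp.congr'
    filter_upwards [Filter.eventually_atTop.2 ⟨1, fun m hm => hm⟩] with m hm
    have hm0 : (0 : ℝ) ≤ (m : ℝ) := by positivity
    have hx : ((m : ℝ) ^ γ) ^ γ⁻¹ = (m : ℝ) := by
      rw [← Real.rpow_mul hm0, mul_inv_cancel₀ (ne_of_gt hγ0), Real.rpow_one]
    have hlog2 : Real.log 2 < 1 := by
      have := Real.log_two_lt_d9; linarith
    have h10 : (1 : ℝ) - Real.log 2 ≠ 0 := by linarith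
    have harg : (Real.log 2 - 1) * (b / (1 - Real.log 2) * (m : ℝ) ^ γ) = -b * (m : ℝ) ^ γ := by
      rw [show Real.log 2 - 1 = -(1 - Real.log 2) by ring]
      rw [mul_comm (b / (1 - Real.log 2)) ((m : ℝ) ^ γ), ← mul_assoc, mul_comm (-(1 - Real.log 2)),
        mul_assoc, neg_mul, mul_div_cancel₀ _ h10]
      ring
    dsimp only [Function.comp]
    rw [hx, harg]
    ring
  have hev : ∀ᶠ n : ℕ in Filter.atTop, (n : ℝ) * (k : ℝ) *
      Real.exp ((Real.log 2 - 1) * (b / (1 - Real.log 2) * (n : ℝ) ^ γ)) < 1 :=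
    htend.eventually_lt_const one_pos
  obtain ⟨n₀, hn₀⟩ := Filter.eventually_atTop.1 hev
  refine ⟨n₀, ?_⟩
  intro n hn W _ _ G A hunif hlin _hpart i₀ j₀ _hij hcardn hdegn
  have hbD : b / (1 - Real.log 2) = D * c := by
    have hlog2 : Real.log 2 < 1 := by
      have := Real.log_two_lt_d9; linarith
    rw [hbdef]
    exact mul_div_cancel_left₀ _ (by linarith)
  have hn1 := hn₀ n hn
  rw [hbD] at hn1
  -- notation
  set t : ℝ := D * (n : ℝ) ^ γ / (2 * (k : ℝ) ^ (r - 1)) with htdef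
  have htc : D * c * (n : ℝ) ^ γ = t := by
    rw [htdef, hcdef, hqdef]
    have h : ((k:ℝ) ^ (r-1)) ≠ 0 := by positivity
    field_simp
  rw [htc] at hn1
  set K : ℝ := (k : ℝ) ^ (Fintype.card W) with hKdef
  have hK0 : 0 < K := by positivity
  -- blocks
  set Bv : W → Finset (Finset W) := fun v => (G.filter fun e => v ∈ e).image (fun e : Finset W => e \ {v})
    with hBvdef
  have hinj : ∀ v : W, Set.InjOn (fun e : Finset W => e \ {v}) ↑(G.filter fun e => v ∈ e) := by
    intro v e he e' he' hee'
    simp only [Finset.coe_filter, Set.mem_setOf_eq] at he he'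
    have h1 : insert v (e \ {v}) = e := by
      rw [Finset.sdiff_singleton_eq_erase, Finset.insert_erase he.2]
    have h2 : insert v (e' \ {v}) = e' := by
      rw [Finset.sdiff_singleton_eq_erase, Finset.insert_erase he'.2]
    dsimp only at hee'
    rw [← h1, ← h2, hee']
  have hBvcard : ∀ v : W, (Bv v).card = hdeg G v := by
    intro v
    rw [hBvdef]
    exact Finset.card_image_of_injOn (hinj v)
  have hBblock : ∀ v : W, ∀ bb ∈ Bv v, bb.card = r - 1 := by
    intro v bb hbb
    rw [hBvdef] at hbb
    simp only [Finset.mem_image, Finset.mem_filter] at hbb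
    obtain ⟨e, ⟨heG, hev'⟩, rfl⟩ := hbb
    rw [Finset.sdiff_singleton_eq_erase, Finset.card_erase_of_mem hev', hunif e heG]
  have hBdisj : ∀ v : W, ∀ bb ∈ Bv v, ∀ bb' ∈ Bv v, bb ≠ bb' → Disjoint bb bb' := by
    intro v bb hbb bb' hbb' hne
    rw [hBvdef] at hbb hbb'
    simp only [Finset.mem_image, Finset.mem_filter] at hbb hbb'
    obtain ⟨e, ⟨heG, hev'⟩, rfl⟩ := hbb
    obtain ⟨e', ⟨heG', hev''⟩, rfl⟩ := hbb'
    have hee : e ≠ e' := fun h => hne (by rw [h])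
    have hcap := hlin e heG e' heG' hee
    rw [Finset.disjoint_left]
    intro x hx hx'
    simp only [Finset.mem_sdiff, Finset.mem_singleton] at hx hx'
    have hxv : x ≠ v := hx.2
    have hsub : ({v, x} : Finset W) ⊆ e ∩ e' := by
      intro y hy
      simp only [Finset.mem_insert, Finset.mem_singleton] at hy
      rcases hy with rfl | rfl
      · exact Finset.mem_inter.mpr ⟨hev', hev''⟩
      · exact Finset.mem_inter.mpr ⟨hx.1, hx'.1⟩
    have h2 : ({v, x} : Finset W).card = 2 := by
      rw [Finset.card_insert_of_notMem (by simp [Ne.symm hxv]), Finset.card_singleton]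
    have := Finset.card_le_card hsub
    omega
  -- the bad set
  set Bad : Finset (W → Fin k) := (A i₀ ∪ A j₀).biUnion fun v => Finset.univ.biUnion
    fun i : Fin k => Finset.univ.filter fun f : W → Fin k =>
      (((Bv v).filter fun bb => ∀ x ∈ bb, f x = i).card : ℝ) < t with hBaddef
  have hperv : ∀ v ∈ A i₀ ∪ A j₀, ∀ i : Fin k,
      ((Finset.univ.filter fun f : W → Fin k =>
        (((Bv v).filter fun bb => ∀ x ∈ bb, f x = i).card : ℝ) < t).card : ℝ)
      ≤ K * Real.exp ((Real.log 2 - 1) * t) := by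
    intro v hv i
    have hd : D * (n : ℝ) ^ γ ≤ ((Bv v).card : ℝ) := by
      rw [hBvcard v]; exact hdegn v hv
    have hbc := bad_count (show 0 < k by omega) i (Bv v) (hBdisj v) t
    have hprodeq : ∏ bb ∈ Bv v, (1 - 2⁻¹ * ((k : ℝ) ^ bb.card)⁻¹) = (1 - c) ^ (Bv v).card := by
      rw [← Finset.prod_const]
      refine Finset.prod_congr rfl (fun bb hbb => ?_)
      rw [hBblock v bb hbb, hcdef, hqdef]
    rw [hprodeq] at hbc
    have h2t : (0 : ℝ) < (2 : ℝ) ^ (-t) := Real.rpow_pos_of_pos two_pos _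
    have h2t' : (0 : ℝ) < (2 : ℝ) ^ t := Real.rpow_pos_of_pos two_pos _
    have h1c0 : (0 : ℝ) ≤ 1 - c := by linarith
    have e1 : (1 - c) ^ (Bv v).card ≤ Real.exp (-c) ^ (Bv v).card :=
      pow_le_pow_left₀ h1c0 (by linarith [Real.add_one_le_exp (-c)]) _
    have e2 : Real.exp (-c) ^ (Bv v).card = Real.exp (((Bv v).card : ℝ) * -c) :=
      (Real.exp_nat_mul _ _).symm
    have e3 : Real.exp (((Bv v).card : ℝ) * -c) ≤ Real.exp (-t) := by
      rw [Real.exp_le_exp]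
      nlinarith [htc, hd, hc0]
    have hfin : Real.exp (-t) * (2 : ℝ) ^ t = Real.exp ((Real.log 2 - 1) * t) := by
      rw [Real.rpow_def_of_pos two_pos, ← Real.exp_add]
      ring_nf
    calc ((Finset.univ.filter fun f : W → Fin k =>
          (((Bv v).filter fun bb => ∀ x ∈ bb, f x = i).card : ℝ) < t).card : ℝ)
        = ((Finset.univ.filter fun f : W → Fin k =>
          (((Bv v).filter fun bb => ∀ x ∈ bb, f x = i).card : ℝ) < t).card : ℝ)
            * (2 : ℝ) ^ (-t) * (2 : ℝ) ^ t := by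
          rw [mul_assoc, ← Real.rpow_add two_pos, neg_add_cancel, Real.rpow_zero, mul_one]
      _ ≤ K * (1 - c) ^ (Bv v).card * (2 : ℝ) ^ t :=
          mul_le_mul_of_nonneg_right hbc h2t'.le
      _ ≤ K * Real.exp (-t) * (2 : ℝ) ^ t := by
          have : (1 - c) ^ (Bv v).card ≤ Real.exp (-t) := by
            calc (1 - c) ^ (Bv v).card ≤ Real.exp (-c) ^ (Bv v).card := e1
              _ = Real.exp (((Bv v).card : ℝ) * -c) := e2
              _ ≤ Real.exp (-t) := e3
          have := mul_le_mul_of_nonneg_left this hK0.le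
          exact mul_le_mul_of_nonneg_right this h2t'.le
      _ = K * Real.exp ((Real.log 2 - 1) * t) := by
          rw [mul_assoc, hfin]
  have hBadlt : (Bad.card : ℝ) < K := by
    have h1 : Bad.card ≤ ∑ v ∈ A i₀ ∪ A j₀, ∑ i : Fin k,
        (Finset.univ.filter fun f : W → Fin k =>
          (((Bv v).filter fun bb => ∀ x ∈ bb, f x = i).card : ℝ) < t).card := by
      exact Finset.card_biUnion_le.trans (Finset.sum_le_sum fun v _ => Finset.card_biUnion_le)
    have hexp0 : (0 : ℝ) < Real.exp ((Real.log 2 - 1) * t) := Real.exp_pos _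
    calc (Bad.card : ℝ)
        ≤ ((∑ v ∈ A i₀ ∪ A j₀, ∑ i : Fin k,
            (Finset.univ.filter fun f : W → Fin k =>
              (((Bv v).filter fun bb => ∀ x ∈ bb, f x = i).card : ℝ) < t).card : ℕ) : ℝ) := by
          exact_mod_cast h1
      _ = ∑ v ∈ A i₀ ∪ A j₀, ∑ i : Fin k,
            ((Finset.univ.filter fun f : W → Fin k =>
              (((Bv v).filter fun bb => ∀ x ∈ bb, f x = i).card : ℝ) < t).card : ℝ) := by
          push_cast; rfl
      _ ≤ ∑ v ∈ A i₀ ∪ A j₀, ∑ _i : Fin k, K * Real.exp ((Real.log 2 - 1) * t) :=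
          Finset.sum_le_sum fun v hv => Finset.sum_le_sum fun i _ => hperv v hv i
      _ = (n : ℝ) * ((k : ℝ) * (K * Real.exp ((Real.log 2 - 1) * t))) := by
          rw [Finset.sum_const, Finset.sum_const, Finset.card_univ, Fintype.card_fin, hcardn]
          simp [nsmul_eq_mul]
      _ = ((n : ℝ) * (k : ℝ) * Real.exp ((Real.log 2 - 1) * t)) * K := by ring
      _ < 1 * K := mul_lt_mul_of_pos_right hn1 hK0
      _ = K := one_mul K
  -- choose a good coloring
  have hex : ∃ f : W → Fin k, f ∉ Bad := by
    by_contra hcon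
    push_neg at hcon
    have hsub : (Finset.univ : Finset (W → Fin k)) ⊆ Bad := fun f _ => hcon f
    have hle := Finset.card_le_card hsub
    have hcard : (Finset.univ : Finset (W → Fin k)).card = k ^ (Fintype.card W) := by
      rw [Finset.card_univ, Fintype.card_fun, Fintype.card_fin]
    rw [hcard] at hle
    have : (K : ℝ) ≤ (Bad.card : ℝ) := by
      rw [hKdef]
      exact_mod_cast hle
    linarith
  obtain ⟨f, hf⟩ := hex
  refine ⟨fun i => Finset.univ.filter fun x => f x = i, ?_, ?_⟩
  · intro x
    refine ⟨f x, by simp, fun y hy => ?_⟩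
    have := (Finset.mem_filter.mp hy).2
    exact this.symm
  · intro v hv i
    have hnotbad : ¬ ((((Bv v).filter fun bb => ∀ x ∈ bb, f x = i).card : ℝ) < t) := by
      intro hlt
      apply hf
      rw [hBaddef]
      refine Finset.mem_biUnion.mpr ⟨v, hv, Finset.mem_biUnion.mpr ⟨i, Finset.mem_univ _, ?_⟩⟩
      exact Finset.mem_filter.mpr ⟨Finset.mem_univ _, hlt⟩
    push_neg at hnotbad
    have hcount : (G.filter fun e => v ∈ e ∧ e \ {v} ⊆
          (Finset.univ.filter fun x => f x = i)).card
        = ((Bv v).filter fun bb => ∀ x ∈ bb, f x = i).card := by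
      have himg : ((Bv v).filter fun bb => ∀ x ∈ bb, f x = i)
          = ((G.filter fun e => v ∈ e).filter fun e => ∀ x ∈ e \ {v}, f x = i).image
              (fun e : Finset W => e \ {v}) := by
        rw [hBvdef, Finset.filter_image]
      rw [himg, Finset.card_image_of_injOn ((hinj v).mono (by
        exact_mod_cast Finset.coe_subset.mpr (Finset.filter_subset _ _))),
        Finset.filter_filter]
      congr 1
      apply Finset.filter_congr
      intro e _
      constructor
      · rintro ⟨hve, hsub⟩
        refine ⟨hve, fun x hx => ?_⟩
        have := hsub hx
        exact (Finset.mem_filter.mp this).2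
      · rintro ⟨hve, hall⟩
        refine ⟨hve, fun x hx => ?_⟩
        exact Finset.mem_filter.mpr ⟨Finset.mem_univ _, hall x hx⟩
    rw [hcount]
    exact hnotbad
end
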